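/- Let L/k be a finite Galois extension (char k ≠ 2) such that every element of k^× is a square in L. Then the Dress map h_{L/k} : A(Gal(L/k)) → GW(k) is surjective. -/

import Mathlib

/-- The relations ideal defining the Grothendieck–Witt ring of a field `k`
(characteristic ≠ 2) by its standard presentation: generators `⟨a⟩` for
`a ∈ kˣ` (multiplicative via the group algebra), with relations
`⟨a²⟩ = 1` and the chain relation `⟨a⟩ + ⟨b⟩ = ⟨a+b⟩ + ⟨(a+b)ab⟩` when `a + b ≠ 0`. -/
noncomputable def GWIdeal (k : Type) [Field k] : Ideal (MonoidAlgebra ℤ kˣ) :=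
  Ideal.span { x | (∃ a : kˣ, x = MonoidAlgebra.of ℤ kˣ (a * a) - 1) ∨
    (∃ a b c : kˣ, ((a : k) + (b : k) = (c : k)) ∧
      x = MonoidAlgebra.of ℤ kˣ a + MonoidAlgebra.of ℤ kˣ b
        - MonoidAlgebra.of ℤ kˣ c - MonoidAlgebra.of ℤ kˣ (c * a * b)) }

/-- The Grothendieck–Witt ring of a field `k` of characteristic ≠ 2. -/
def GW (k : Type) [Field k] : Type := MonoidAlgebra ℤ kˣ ⧸ GWIdeal k

noncomputable instance (k : Type) [Field k] : CommRing (GW k) :=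
  Ideal.Quotient.commRing (GWIdeal k)

/-- The class `⟨a⟩` of the one-dimensional quadratic form `x ↦ a x²` in `GW k`. -/
noncomputable def GWform (k : Type) [Field k] (a : kˣ) : GW k :=
  Ideal.Quotient.mk (GWIdeal k) (MonoidAlgebra.of ℤ kˣ a)


open scoped Classical in
/-- The "mark vector" of the `G`-set `G/H`: the function sending a subgroup `K` to
the number of `K`-fixed points of `G/H`. -/
noncomputable def mark {G : Type} [Group G] (H : Subgroup G) : Subgroup G → ℤ :=
  fun K => (Nat.card (MulAction.fixedPoints K (G ⧸ H)) : ℤ)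

/-- The Burnside ring `A(G)` of a finite group `G`, realized via the (injective) mark
homomorphism as the subring of `∏_{K ≤ G} ℤ` generated by the marks of the transitive
`G`-sets `G/H`. -/
noncomputable def BurnsideRing (G : Type) [Group G] : Subring (Subgroup G → ℤ) :=
  Subring.closure (Set.range (mark (G := G)))

/-- The basis element `[G/H]` of the Burnside ring `A(G)`. -/
noncomputable def burnsideElt {G : Type} [Group G] (H : Subgroup G) : BurnsideRing G :=
  ⟨mark H, Subring.subset_closure ⟨H, rfl⟩⟩

/-- `x ∈ GW k` is the class of the quadratic form `q`: `q` is isometric to a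
diagonal form `⟨d₁, …, d_m⟩` and `x = ⟨d₁⟩ + ⋯ + ⟨d_m⟩`. -/
def IsGWClassOf (k : Type) [Field k] {V : Type} [AddCommGroup V] [Module k V]
    (q : QuadraticForm k V) (x : GW k) : Prop :=
  ∃ (m : ℕ) (d : Fin m → kˣ),
    QuadraticMap.Equivalent q (QuadraticMap.weightedSumSquares k fun i => (d i : k)) ∧
    x = ∑ i, GWform k (d i)

/-- `h` is the Dress map `A(G) → GW(k)` of the Galois extension `L/k`:
the ring homomorphism sending the class `[G/H]` to the class in `GW(k)` of the trace
form `x ↦ tr_{L^H/k}(x²)` of the fixed field `L^H`. -/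
def IsDressMap (k L : Type) [Field k] [Field L] [Algebra k L]
    (h : BurnsideRing (L ≃ₐ[k] L) →+* GW k) : Prop :=
  ∀ H : Subgroup (L ≃ₐ[k] L),
    IsGWClassOf k (Algebra.traceForm k (IntermediateField.fixedField H)).toQuadraticMap
      (h (burnsideElt H))

/-!
Every generator `⟨a⟩` of `GW k` lies in the image of `h`. If `a` is a square, `⟨a⟩ = 1`.
Otherwise `a` has a square root `x ∈ L`, and `k⟮x⟯` is the fixed field of its fixing subgroup `H`.
In the basis `1, x` the trace form of `k⟮x⟯` is `⟨2, 2a⟩`, and isometric binary diagonal forms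
have the same class in `GW k`, so `h [G/H] = ⟨2⟩ + ⟨2a⟩`. Taking `a = 2` puts `⟨2⟩` in the image,
hence also `⟨2a⟩` and `⟨a⟩ = ⟨2⟩ * ⟨2a⟩`.
-/

section GrothendieckWitt

variable {k : Type} [Field k]

lemma GWform_one : GWform k 1 = 1 := by
  simp only [GWform, map_one]
  rfl

lemma GWform_mul (a b : kˣ) : GWform k (a * b) = GWform k a * GWform k b := by
  simp only [GWform, map_mul]
  rfl

lemma GWform_mul_self (c : kˣ) : GWform k (c * c) = 1 :=
  (Ideal.Quotient.eq (I := GWIdeal k) (y := 1).mpr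
    (Ideal.subset_span (Or.inl ⟨c, rfl⟩))).trans (map_one _)

lemma GWform_eq_of_eq_mul_sq {u v : kˣ} {c : k} (h : (u : k) = v * c ^ 2) :
    GWform k u = GWform k v := by
  have hc : c ≠ 0 := by
    rintro rfl
    exact u.ne_zero (by simp [h])
  have huv : u = v * (Units.mk0 c hc * Units.mk0 c hc) := by
    ext
    simp [h, sq]
  rw [huv, GWform_mul, GWform_mul_self, mul_one]

lemma GWform_eq_one_of_isSquare {u : kˣ} (hu : IsSquare (u : k)) : GWform k u = 1 := by
  obtain ⟨c, hc⟩ := hu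
  rw [← GWform_one]
  exact GWform_eq_of_eq_mul_sq (c := c) (by simp [hc, sq])

lemma GWform_add_GWform_of_add_eq {a b c : kˣ} (h : (a : k) + b = c) :
    GWform k a + GWform k b = GWform k c + GWform k (c * a * b) := by
  refine Ideal.Quotient.eq.mpr ?_
  rw [← sub_sub]
  exact Ideal.subset_span (Or.inr ⟨a, b, c, h, rfl⟩)

lemma GWform_add_GWform_eq_of_eq_add {p q r : kˣ} {c b : k}
    (hr : (r : k) = p * c ^ 2 + q * b ^ 2) :
    GWform k p + GWform k q = GWform k r + GWform k (r * p * q) := by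
  by_cases hc : c = 0
  · rw [GWform_eq_of_eq_mul_sq (u := r) (v := q) (c := b) (by simp [hr, hc]),
      GWform_eq_of_eq_mul_sq (u := r * p * q) (v := p) (c := q * b) (by simp [hr, hc]; ring),
      add_comm]
  by_cases hb : b = 0
  · rw [GWform_eq_of_eq_mul_sq (u := r) (v := p) (c := c) (by simp [hr, hb]),
      GWform_eq_of_eq_mul_sq (u := r * p * q) (v := q) (c := p * c) (by simp [hr, hb]; ring)]
  set pc := p * Units.mk0 (c ^ 2) (by positivity)
  set qb := q * Units.mk0 (b ^ 2) (by positivity)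
  have hchain := GWform_add_GWform_of_add_eq (a := pc) (b := qb) (c := r) (by simp [pc, qb, hr])
  rwa [GWform_eq_of_eq_mul_sq (u := pc) (v := p) (c := c) (by simp [pc]),
    GWform_eq_of_eq_mul_sq (u := qb) (v := q) (c := b) (by simp [qb]),
    GWform_eq_of_eq_mul_sq (u := r * pc * qb) (v := r * p * q) (c := c * b)
      (by simp [pc, qb]; ring)] at hchain

lemma GWform_add_GWform_eq_of_orthogonal {p q r s : kˣ} {c₀ b₀ c₁ b₁ : k}
    (hr : (r : k) = p * c₀ ^ 2 + q * b₀ ^ 2) (hs : (s : k) = p * c₁ ^ 2 + q * b₁ ^ 2)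
    (horth : (p : k) * (c₀ * c₁) + q * (b₀ * b₁) = 0) :
    GWform k r + GWform k s = GWform k p + GWform k q := by
  -- `r s = p q D²` for the determinant `D` of the coordinates, so `⟨s⟩ = ⟨r p q⟩`.
  have hdet : (r : k) * s = p * q * (c₀ * b₁ - c₁ * b₀) ^ 2 := by
    rw [hr, hs]
    linear_combination ((p : k) * (c₀ * c₁) + q * (b₀ * b₁)) * horth
  rw [GWform_add_GWform_eq_of_eq_add hr,
    GWform_eq_of_eq_mul_sq (u := s) (v := r * p * q) (c := (c₀ * b₁ - c₁ * b₀) / r)]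
  have hr0 := r.ne_zero
  push_cast
  field_simp
  linear_combination hdet

open QuadraticMap in
lemma GWform_add_GWform_eq_of_equivalent (h2 : (2 : k) ≠ 0) {d p : Fin 2 → kˣ}
    (he : (weightedSumSquares k fun i => (d i : k)).Equivalent
      (weightedSumSquares k fun i => (p i : k))) :
    GWform k (d 0) + GWform k (d 1) = GWform k (p 0) + GWform k (p 1) := by
  obtain ⟨e⟩ := he
  have hval (v : Fin 2 → k) : (d 0 : k) * (v 0 * v 0) + d 1 * (v 1 * v 1) =
      p 0 * (e v 0 * e v 0) + p 1 * (e v 1 * e v 1) := by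
    simpa only [weightedSumSquares_apply, smul_eq_mul, Fin.sum_univ_two] using (e.map_app v).symm
  have hd₀ := hval (Pi.single 0 1)
  have hd₁ := hval (Pi.single 1 1)
  have hd₀₁ := hval (Pi.single 0 1 + Pi.single 1 1)
  simp only [map_add, Pi.add_apply, Pi.single_eq_same, ne_eq, zero_ne_one, one_ne_zero,
    not_false_eq_true, Pi.single_eq_of_ne, mul_zero, mul_one, add_zero, zero_add] at hd₀ hd₁ hd₀₁
  exact GWform_add_GWform_eq_of_orthogonal (c₀ := e (Pi.single 0 1) 0)
    (b₀ := e (Pi.single 0 1) 1) (c₁ := e (Pi.single 1 1) 0) (b₁ := e (Pi.single 1 1) 1)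
    (by linear_combination hd₀) (by linear_combination hd₁)
    (mul_left_cancel₀ h2 (by linear_combination hd₀ + hd₁ - hd₀₁))

lemma closure_range_GWform : AddSubgroup.closure (Set.range (GWform k)) = ⊤ := by
  refine (AddSubgroup.eq_top_iff' _).mpr fun z => ?_
  obtain ⟨y, rfl⟩ := Ideal.Quotient.mk_surjective (I := GWIdeal k) z
  induction y using MonoidAlgebra.induction_linear with
  | zero => exact zero_mem _
  | add f g hf hg => rw [map_add]; exact add_mem hf hg
  | single u n =>
    rw [← mul_one n, ← smul_eq_mul, ← MonoidAlgebra.smul_single, map_zsmul]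
    exact zsmul_mem (AddSubgroup.subset_closure (Set.mem_range_self u)) n

lemma GWform_mem_of_forall_not_isSquare {S : Subring (GW k)} (t : kˣ)
    (hS : ∀ a : kˣ, ¬IsSquare (a : k) → GWform k t + GWform k (t * a) ∈ S) (a : kˣ) :
    GWform k a ∈ S := by
  have ht : GWform k t ∈ S := by
    by_cases hsq : IsSquare (t : k)
    · exact GWform_eq_one_of_isSquare hsq ▸ S.one_mem
    · simpa [GWform_mul_self] using sub_mem (hS t hsq) S.one_mem
  by_cases hsq : IsSquare (a : k)
  · exact GWform_eq_one_of_isSquare hsq ▸ S.one_mem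
  · have hta : GWform k (t * a) ∈ S := by simpa using sub_mem (hS a hsq) ht
    have := S.mul_mem ht hta
    rwa [← GWform_mul, ← mul_assoc, GWform_mul _ a, GWform_mul_self, one_mul] at this

end GrothendieckWitt

section QuadraticExtension

open Polynomial IntermediateField

variable {k L : Type} [Field k] [Field L] [Algebra k L] {a : k} {x : L}

lemma minpoly_eq_X_sq_sub_C (ha : ¬IsSquare a) (hx : x ^ 2 = algebraMap k L a) :
    minpoly k x = X ^ 2 - C a := by
  have hirr : Irreducible (X ^ 2 - C a) :=
    X_pow_sub_C_irreducible_of_prime Nat.prime_two fun b hb => ha ⟨b, by rw [← hb, sq]⟩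
  refine (minpoly.eq_of_irreducible_of_monic hirr ?_ (monic_X_pow_sub_C _ two_ne_zero)).symm
  simp [hx]

lemma isIntegral_of_sq_eq_algebraMap (hx : x ^ 2 = algebraMap k L a) : IsIntegral k x :=
  ⟨X ^ 2 - C a, monic_X_pow_sub_C _ two_ne_zero, by simp [hx]⟩

lemma trace_adjoin_gen_eq_zero (ha : ¬IsSquare a) (hx : x ^ 2 = algebraMap k L a) :
    Algebra.trace k k⟮x⟯ (AdjoinSimple.gen k x) = 0 := by
  rw [trace_adjoinSimpleGen (isIntegral_of_sq_eq_algebraMap hx),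
    minpoly_eq_X_sq_sub_C ha hx, neg_eq_zero, nextCoeff_of_natDegree_pos (by simp)]
  simp

lemma finrank_adjoin_eq_two (ha : ¬IsSquare a) (hx : x ^ 2 = algebraMap k L a) :
    Module.finrank k k⟮x⟯ = 2 := by
  rw [adjoin.finrank (isIntegral_of_sq_eq_algebraMap hx), minpoly_eq_X_sq_sub_C ha hx,
    natDegree_X_pow_sub_C]

open QuadraticMap in
lemma traceForm_adjoin_equivalent (h2 : (2 : k) ≠ 0) (ha : ¬IsSquare a)
    (hx : x ^ 2 = algebraMap k L a) :
    (Algebra.traceForm k k⟮x⟯).toQuadraticMap.Equivalent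
      (weightedSumSquares k ![2, 2 * a]) := by
  have : Invertible (2 : k) := invertibleOfNonzero h2
  let pb := adjoin.powerBasis (isIntegral_of_sq_eq_algebraMap hx)
  have hdim : pb.dim = 2 := by
    rw [← pb.finrank, finrank_adjoin_eq_two ha hx]
  let B := pb.basis.reindex (finCongr hdim)
  have hB (i : Fin 2) : B i = AdjoinSimple.gen k x ^ (i : ℕ) := by
    simp [B, pb]
  have hg : AdjoinSimple.gen k x * AdjoinSimple.gen k x = algebraMap k k⟮x⟯ a :=
    Subtype.ext (by simpa [_root_.sq] using hx)
  have htr (c : k) : Algebra.trace k k⟮x⟯ (algebraMap k k⟮x⟯ c) = 2 * c := by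
    rw [Algebra.trace_algebraMap, finrank_adjoin_eq_two ha hx, nsmul_eq_mul, Nat.cast_ofNat]
  have hortho : (associated (R := k) (Algebra.traceForm k k⟮x⟯).toQuadraticMap).IsOrthoᵢ B := by
    intro i j hij
    change associatedHom k _ (B i) (B j) = 0
    rw [associated_left_inverse k (Algebra.traceForm_isSymm k).eq]
    fin_cases i <;> fin_cases j <;> simp_all [trace_adjoin_gen_eq_zero ha hx]
  have hrepr : (Algebra.traceForm k k⟮x⟯).toQuadraticMap.basisRepr B =
      weightedSumSquares k ![2, 2 * a] := by
    rw [basisRepr_eq_of_iIsOrtho _ _ hortho]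
    congr 1
    ext i
    fin_cases i
    · simpa [hB] using htr 1
    · simp [hB, hg, htr]
  exact ⟨hrepr ▸ isometryEquivBasisRepr _ B⟩

end QuadraticExtension

open IntermediateField in
lemma IsDressMap.GWform_add_GWform_mul_mem_range {k L : Type} [Field k] [Field L] [Algebra k L]
    [FiniteDimensional k L] [IsGalois k L] (h2 : (2 : k) ≠ 0)
    {h : BurnsideRing (L ≃ₐ[k] L) →+* GW k} (hD : IsDressMap k L h)
    {a : kˣ} (ha : ¬IsSquare (a : k)) {x : L} (hx : x ^ 2 = algebraMap k L a) :
    GWform k (Units.mk0 2 h2) + GWform k (Units.mk0 2 h2 * a) ∈ h.range := by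
  have hclass := hD (fixingSubgroup k⟮x⟯)
  rw [IsGalois.fixedField_fixingSubgroup] at hclass
  obtain ⟨m, d, ⟨e⟩, hsum⟩ := hclass
  obtain rfl : m = 2 := by
    simpa [finrank_adjoin_eq_two ha hx] using e.toLinearEquiv.finrank_eq.symm
  have hweights :
      ![2, 2 * (a : k)] = fun i => ((![Units.mk0 2 h2, Units.mk0 2 h2 * a] i : kˣ) : k) := by
    ext i
    fin_cases i <;> simp
  have he := (QuadraticMap.Equivalent.symm ⟨e⟩).trans (traceForm_adjoin_equivalent h2 ha hx)
  rw [hweights] at he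
  refine ⟨burnsideElt _, hsum.trans ?_⟩
  simpa [Fin.sum_univ_two] using GWform_add_GWform_eq_of_equivalent h2 he

/-- If `L/k` is a finite Galois extension (char `k` ≠ 2) such that every element of
`kˣ` is a square in `L`, then the Dress map `A(Gal(L/k)) → GW(k)` is surjective. -/
theorem stmt16 (k L : Type) [Field k] [Field L] [Algebra k L]
    [FiniteDimensional k L] [IsGalois k L] (h2 : (2 : k) ≠ 0)
    (hqc : ∀ a : k, a ≠ 0 → ∃ x : L, x ^ 2 = algebraMap k L a)
    (h : BurnsideRing (L ≃ₐ[k] L) →+* GW k) (hD : IsDressMap k L h) :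
    Function.Surjective h := by
  have hgen (a : kˣ) : GWform k a ∈ h.range := by
    refine GWform_mem_of_forall_not_isSquare (Units.mk0 2 h2) (fun b hb => ?_) a
    obtain ⟨x, hx⟩ := hqc b b.ne_zero
    exact hD.GWform_add_GWform_mul_mem_range h2 hb hx
  have hle : AddSubgroup.closure (Set.range (GWform k)) ≤ h.range.toAddSubgroup :=
    (AddSubgroup.closure_le _).mpr (Set.range_subset_iff.mpr hgen)
  rw [closure_range_GWform] at hle
  exact fun z => h.mem_range.mp (hle (AddSubgroup.mem_top z))
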